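/- arXiv:1603.05801 — 5 statements merged into one kernel-verified Lean document; each statement's English description precedes it below -/
import Mathlib

section
/- Let M be a real 4×4 matrix which is invertible, has det M = 1, and is physically realizable in the sense that its Cloude coherency matrix C(M) = (1/4) Σ_{i,j=0}^{3} M_{ij} (σ_i ⊗ σ_j*) is a positive semidefinite Hermitian 4×4 complex matrix. Then for every admissible Stokes vector s ∈ ℝ⁴ one has (M s)ᵀ G (M s) ≥ sᵀ G s, i.e. the Minkowski metric of the Stokes vector cannot decrease under a physically realizable unit-determinant Mueller transformation. -/
open Matrix Kronecker ComplexOrder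

noncomputable def G : Matrix (Fin 4) (Fin 4) ℝ := Matrix.diagonal ![1, -1, -1, -1]

def StokesAdmissible (s : Fin 4 → ℝ) : Prop := 0 ≤ s 0 ∧ 0 ≤ s ⬝ᵥ G.mulVec s

noncomputable def pauli : Fin 4 → Matrix (Fin 2) (Fin 2) ℂ :=
  ![!![1, 0; 0, 1], !![1, 0; 0, -1], !![0, 1; 1, 0], !![0, -Complex.I; Complex.I, 0]]

noncomputable def cloudeCCM (M : Matrix (Fin 4) (Fin 4) ℝ) :
    Matrix (Fin 2 × Fin 2) (Fin 2 × Fin 2) ℂ :=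
  (1 / 4 : ℂ) • ∑ i : Fin 4, ∑ j : Fin 4,
    (M i j : ℂ) • (pauli i ⊗ₖ (pauli j).map (starRingEnd ℂ))

open MeasureTheory Topology Pointwise

/-!
For the Stokes vectors `w(v) = (vᴴ σᵢ v)ᵢ` of pure states, `4 zᴴ C(M) z = w(v)ᵀ M w(x)` at
`z = v ⊗ x̄`, so positive semidefiniteness of `C(M)` gives `w(v)ᵀ M w(x) ≥ 0`. Every admissible
Stokes vector is a sum of two such vectors and the cone `K` of admissible Stokes vectors is
self-dual, so `M` maps `K` into itself.

A linear map `A` with `A K ⊆ K` maps the order interval `[0, s] = K ∩ (s - K)` into `[0, A s]`.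
A Minkowski reflection carrying `s` to `(√(sᵀGs), 0, 0, 0)` preserves `K` and volume, so the volume
of `[0, s]` is proportional to `(sᵀGs)²`. Hence `|det A| (sᵀGs)² ≤ ((As)ᵀG(As))²`, which for
`det M = 1` is the claim.
-/

lemma dotProduct_G_mulVec (x y : Fin 4 → ℝ) :
    x ⬝ᵥ G *ᵥ y = x 0 * y 0 - x 1 * y 1 - x 2 * y 2 - x 3 * y 3 := by
  simp only [dotProduct, G, mulVec_diagonal, Fin.sum_univ_four, cons_val_zero, cons_val_one,
    cons_val]
  ring

lemma G_mulVec_dotProduct_comm (x y : Fin 4 → ℝ) : x ⬝ᵥ G *ᵥ y = y ⬝ᵥ G *ᵥ x := by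
  simp only [dotProduct_G_mulVec]; ring

lemma stokesAdmissible_iff {s : Fin 4 → ℝ} :
    StokesAdmissible s ↔ 0 ≤ s 0 ∧ s 1 ^ 2 + s 2 ^ 2 + s 3 ^ 2 ≤ s 0 ^ 2 := by
  rw [StokesAdmissible, dotProduct_G_mulVec]
  constructor <;> rintro ⟨h0, h⟩ <;> exact ⟨h0, by nlinarith⟩

namespace StokesAdmissible

variable {s t : Fin 4 → ℝ}

lemma abs_spatial_dotProduct_le (hs : StokesAdmissible s) (ht : StokesAdmissible t) :
    |s 1 * t 1 + s 2 * t 2 + s 3 * t 3| ≤ s 0 * t 0 := by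
  rw [stokesAdmissible_iff] at hs ht
  apply abs_le_of_sq_le_sq _ (mul_nonneg hs.1 ht.1)
  nlinarith [mul_le_mul hs.2 ht.2 (by positivity) (sq_nonneg _), sq_nonneg (s 1 * t 2 - s 2 * t 1),
    sq_nonneg (s 1 * t 3 - s 3 * t 1), sq_nonneg (s 2 * t 3 - s 3 * t 2)]

lemma minkowski_nonneg (hs : StokesAdmissible s) (ht : StokesAdmissible t) :
    0 ≤ s ⬝ᵥ G *ᵥ t := by
  rw [dotProduct_G_mulVec]
  linarith [le_abs_self (s 1 * t 1 + s 2 * t 2 + s 3 * t 3), hs.abs_spatial_dotProduct_le ht]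

lemma add (hs : StokesAdmissible s) (ht : StokesAdmissible t) : StokesAdmissible (s + t) := by
  refine ⟨by simpa using add_nonneg hs.1 ht.1, ?_⟩
  simp only [mulVec_add, add_dotProduct, dotProduct_add]
  linarith [hs.2, ht.2, hs.minkowski_nonneg ht, ht.minkowski_nonneg hs]

lemma smul (hs : StokesAdmissible s) {c : ℝ} (hc : 0 ≤ c) : StokesAdmissible (c • s) := by
  refine ⟨by simpa using mul_nonneg hc hs.1, ?_⟩
  simpa [mulVec_smul, mul_assoc] using mul_nonneg (mul_nonneg hc hc) hs.2

end StokesAdmissible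

lemma stokesAdmissible_smul_iff {s : Fin 4 → ℝ} {c : ℝ} (hc : 0 < c) :
    StokesAdmissible (c • s) ↔ StokesAdmissible s :=
  ⟨fun h => by simpa [smul_smul, hc.ne'] using h.smul (inv_nonneg.2 hc.le),
    fun h => h.smul hc.le⟩

lemma stokesAdmissible_unpolarized : StokesAdmissible ![1, 0, 0, 0] := by
  simp [stokesAdmissible_iff]

lemma minkowski_add_smul_unpolarized (x : Fin 4 → ℝ) (c : ℝ) :
    (x + c • ![1, 0, 0, 0]) ⬝ᵥ G *ᵥ (x + c • ![1, 0, 0, 0]) =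
      x ⬝ᵥ G *ᵥ x + 2 * c * x 0 + c ^ 2 := by
  rw [dotProduct_G_mulVec, dotProduct_G_mulVec]
  simp only [Pi.add_apply, Pi.smul_apply, smul_eq_mul, cons_val_zero, cons_val_one, cons_val]
  ring

section Kronecker

variable {R m n : Type*} [CommRing R] [StarRing R] [Fintype m] [Fintype n]

lemma star_dotProduct_kronecker_mulVec (A : Matrix m m R) (B : Matrix n n R) (v : m → R)
    (u : n → R) :
    star (fun p : m × n => v p.1 * u p.2) ⬝ᵥ (A ⊗ₖ B) *ᵥ (fun p : m × n => v p.1 * u p.2) =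
      (star v ⬝ᵥ A *ᵥ v) * (star u ⬝ᵥ B *ᵥ u) := by
  simp only [dotProduct, Finset.sum_mul_sum, Fintype.sum_prod_type]
  refine Finset.sum_congr rfl fun i _ => Finset.sum_congr rfl fun j _ => ?_
  simp only [mulVec, dotProduct, kroneckerMap_apply, Fintype.sum_prod_type, Finset.sum_mul,
    Finset.mul_sum, Pi.star_apply, star_mul']
  rw [Finset.sum_comm]
  refine Finset.sum_congr rfl fun k _ => Finset.sum_congr rfl fun l _ => ?_
  ring

lemma dotProduct_map_star_mulVec_star (A : Matrix n n R) (x : n → R) :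
    x ⬝ᵥ A.map (starRingEnd R) *ᵥ star x = starRingEnd R (star x ⬝ᵥ A *ᵥ x) := by
  simp [dotProduct, mulVec, Finset.mul_sum, starRingEnd_apply]

end Kronecker

/-- The Stokes vector `(vᴴ σᵢ v)ᵢ` of the pure state with Jones vector `v`. -/
noncomputable def pauliStokes (v : Fin 2 → ℂ) : Fin 4 → ℝ :=
  ![Complex.normSq (v 0) + Complex.normSq (v 1), Complex.normSq (v 0) - Complex.normSq (v 1),
    2 * (starRingEnd ℂ (v 0) * v 1).re, 2 * (starRingEnd ℂ (v 0) * v 1).im]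

lemma star_dotProduct_pauli_mulVec (v : Fin 2 → ℂ) (i : Fin 4) :
    star v ⬝ᵥ pauli i *ᵥ v = (pauliStokes v i : ℂ) := by
  fin_cases i <;>
    simp [pauli, pauliStokes, dotProduct, mulVec, Fin.sum_univ_two, Complex.ext_iff,
      Complex.normSq_apply] <;>
    ring_nf <;> simp

lemma star_dotProduct_cloudeCCM_mulVec (M : Matrix (Fin 4) (Fin 4) ℝ) (v x : Fin 2 → ℂ) :
    star (fun p : Fin 2 × Fin 2 => v p.1 * star x p.2) ⬝ᵥ
        cloudeCCM M *ᵥ (fun p : Fin 2 × Fin 2 => v p.1 * star x p.2) =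
      ((pauliStokes v ⬝ᵥ M *ᵥ pauliStokes x / 4 : ℝ) : ℂ) := by
  simp only [cloudeCCM, smul_mulVec, sum_mulVec, dotProduct_smul, dotProduct_sum,
    star_dotProduct_kronecker_mulVec, star_star, dotProduct_map_star_mulVec_star,
    star_dotProduct_pauli_mulVec, Complex.conj_ofReal]
  simp only [dotProduct, mulVec, Finset.mul_sum, Finset.sum_div, smul_eq_mul]
  push_cast
  refine Finset.sum_congr rfl fun i _ => Finset.sum_congr rfl fun j _ => ?_
  ring

lemma pauliStokes_dotProduct_mulVec_nonneg {M : Matrix (Fin 4) (Fin 4) ℝ}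
    (hM : (cloudeCCM M).PosSemidef) (v x : Fin 2 → ℂ) :
    0 ≤ pauliStokes v ⬝ᵥ M *ᵥ pauliStokes x := by
  have h := hM.dotProduct_mulVec_nonneg fun p : Fin 2 × Fin 2 => v p.1 * star x p.2
  rw [star_dotProduct_cloudeCCM_mulVec, Complex.zero_le_real] at h
  linarith

lemma pauliStokes_add_pauliStokes (t : ℝ) (c : ℂ) {d : ℝ} (hd : 0 ≤ d) :
    pauliStokes ![(t : ℂ), c] + pauliStokes ![0, (√d : ℂ)] =
      ![t ^ 2 + Complex.normSq c + d, t ^ 2 - Complex.normSq c - d,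
        2 * t * c.re, 2 * t * c.im] := by
  ext i
  fin_cases i <;> simp [pauliStokes, Complex.normSq_ofReal, Real.mul_self_sqrt hd] <;> ring

lemma exists_pauliStokes_add {s : Fin 4 → ℝ} (hs : StokesAdmissible s) :
    ∃ x y : Fin 2 → ℂ, pauliStokes x + pauliStokes y = s := by
  rw [stokesAdmissible_iff] at hs
  obtain ⟨hs0, hQ⟩ := hs
  have ha : 0 ≤ s 0 + s 1 := by nlinarith
  rcases ha.eq_or_lt with ha | ha
  · have h1 : s 1 = -s 0 := by linarith
    have h2 : s 2 = 0 := by nlinarith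
    have h3 : s 3 = 0 := by nlinarith
    refine ⟨_, _, pauliStokes_add_pauliStokes 0 0 hs0 |>.trans ?_⟩
    ext i
    fin_cases i <;> simp [h1, h2, h3]
  · -- `x = (t, (s₂ + i s₃) / 2t)` with `t² = (s₀ + s₁)/2` matches `s₂, s₃`, and `y = (0, √d)` is
    -- the remainder `(d, -d, 0, 0)`, with `d ≥ 0` because `sᵀGs ≥ 0`.
    set t := √((s 0 + s 1) / 2)
    have ht : t ^ 2 = (s 0 + s 1) / 2 := Real.sq_sqrt (by positivity)
    have ht0 : 0 < t := Real.sqrt_pos.2 (by positivity)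
    have hd : 0 ≤ (s 0 - s 1) / 2 - (s 2 ^ 2 + s 3 ^ 2) / (4 * t ^ 2) := by
      rw [ht, sub_nonneg, div_le_div_iff₀ (by positivity) (by positivity)]
      nlinarith
    refine ⟨_, _, pauliStokes_add_pauliStokes t ⟨s 2 / (2 * t), s 3 / (2 * t)⟩ hd |>.trans ?_⟩
    ext i
    fin_cases i <;> simp [Complex.normSq_mk] <;> field_simp <;> nlinarith

lemma stokesAdmissible_of_forall_dotProduct_nonneg {r : Fin 4 → ℝ}
    (h : ∀ p, StokesAdmissible p → 0 ≤ p ⬝ᵥ r) : StokesAdmissible r := by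
  set m := √(r 1 ^ 2 + r 2 ^ 2 + r 3 ^ 2)
  have hm : m ^ 2 = r 1 ^ 2 + r 2 ^ 2 + r 3 ^ 2 := Real.sq_sqrt (by positivity)
  have hr0 : 0 ≤ r 0 := by
    simpa [dotProduct, Fin.sum_univ_four] using h _ stokesAdmissible_unpolarized
  have hmr : 0 ≤ m * r 0 - m ^ 2 := by
    have hp : StokesAdmissible ![m, -r 1, -r 2, -r 3] := by
      rw [stokesAdmissible_iff]
      simp only [cons_val_zero, cons_val_one, cons_val, even_two, Even.neg_pow]
      exact ⟨Real.sqrt_nonneg _, hm.ge⟩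
    have := h _ hp
    simp only [dotProduct, Fin.sum_univ_four, cons_val_zero, cons_val_one, cons_val] at this
    nlinarith
  rw [stokesAdmissible_iff]
  exact ⟨hr0, by nlinarith [Real.sqrt_nonneg (r 1 ^ 2 + r 2 ^ 2 + r 3 ^ 2)]⟩

lemma mapsTo_mulVec_of_cloudeCCM_posSemidef {M : Matrix (Fin 4) (Fin 4) ℝ}
    (hM : (cloudeCCM M).PosSemidef) :
    Set.MapsTo (M *ᵥ ·) {s | StokesAdmissible s} {s | StokesAdmissible s} := by
  intro s (hs : StokesAdmissible s)
  refine stokesAdmissible_of_forall_dotProduct_nonneg fun p hp => ?_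
  obtain ⟨v, v', rfl⟩ := exists_pauliStokes_add hp
  obtain ⟨x, x', rfl⟩ := exists_pauliStokes_add hs
  have h := pauliStokes_dotProduct_mulVec_nonneg hM
  simp only [add_dotProduct, mulVec_add, dotProduct_add]
  linarith [h v x, h v x', h v' x, h v' x']

noncomputable def minkowskiReflection (a : Fin 4 → ℝ) : Matrix (Fin 4) (Fin 4) ℝ :=
  1 - (2 / (a ⬝ᵥ G *ᵥ a)) • vecMulVec a (G *ᵥ a)

lemma minkowskiReflection_mulVec (a x : Fin 4 → ℝ) :
    minkowskiReflection a *ᵥ x = x - (2 * (a ⬝ᵥ G *ᵥ x) / (a ⬝ᵥ G *ᵥ a)) • a := by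
  rw [minkowskiReflection, sub_mulVec, one_mulVec, smul_mulVec, vecMulVec_mulVec,
    op_smul_eq_smul, smul_smul, dotProduct_comm (G *ᵥ a) x, G_mulVec_dotProduct_comm x a,
    div_mul_eq_mul_div]

section minkowskiReflection

variable {a : Fin 4 → ℝ}

lemma minkowski_axis_minkowskiReflection_mulVec (ha : a ⬝ᵥ G *ᵥ a ≠ 0) (x : Fin 4 → ℝ) :
    a ⬝ᵥ G *ᵥ (minkowskiReflection a *ᵥ x) = -(a ⬝ᵥ G *ᵥ x) := by
  rw [minkowskiReflection_mulVec, mulVec_sub, mulVec_smul, dotProduct_sub, dotProduct_smul,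
    smul_eq_mul]
  field_simp
  ring

lemma minkowskiReflection_mul_self (ha : a ⬝ᵥ G *ᵥ a ≠ 0) :
    minkowskiReflection a * minkowskiReflection a = 1 := by
  refine ext_iff_mulVec.2 fun x => ?_
  rw [← mulVec_mulVec, one_mulVec, minkowskiReflection_mulVec _ (minkowskiReflection a *ᵥ x),
    minkowski_axis_minkowskiReflection_mulVec ha, minkowskiReflection_mulVec]
  ext i
  simp only [Pi.sub_apply, Pi.smul_apply, smul_eq_mul]
  ring

lemma minkowski_minkowskiReflection_mulVec (ha : a ⬝ᵥ G *ᵥ a ≠ 0) (x : Fin 4 → ℝ) :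
    minkowskiReflection a *ᵥ x ⬝ᵥ G *ᵥ (minkowskiReflection a *ᵥ x) = x ⬝ᵥ G *ᵥ x := by
  simp only [minkowskiReflection_mulVec, mulVec_sub, mulVec_smul, dotProduct_sub, sub_dotProduct,
    dotProduct_smul, smul_dotProduct, smul_eq_mul, G_mulVec_dotProduct_comm x a]
  field_simp
  ring

lemma mapsTo_neg_minkowskiReflection (ha : 0 < a ⬝ᵥ G *ᵥ a) :
    Set.MapsTo ((-minkowskiReflection a) *ᵥ ·) {s | StokesAdmissible s}
      {s | StokesAdmissible s} := by
  intro x (hx : StokesAdmissible x)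
  show StokesAdmissible _
  -- `2 a₀ a - (aᵀGa) e₀` is the Jordan square of `a` in the spin factor, hence admissible.
  have hsq : StokesAdmissible ((2 * a 0) • a - (a ⬝ᵥ G *ᵥ a) • ![1, 0, 0, 0]) := by
    rw [stokesAdmissible_iff]
    simp only [Pi.sub_apply, Pi.smul_apply, smul_eq_mul, dotProduct_G_mulVec, cons_val_zero,
      cons_val_one, cons_val]
    constructor <;> nlinarith [sq_nonneg (a 0 ^ 2 - a 1 ^ 2 - a 2 ^ 2 - a 3 ^ 2)]
  have hx0 : 0 ≤ 2 * (a ⬝ᵥ G *ᵥ x) * a 0 - x 0 * (a ⬝ᵥ G *ᵥ a) := by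
    have := hsq.minkowski_nonneg hx
    simp only [Pi.sub_apply, Pi.smul_apply, smul_eq_mul, dotProduct_G_mulVec, cons_val_zero,
      cons_val_one, cons_val] at this ⊢
    linarith
  refine ⟨?_, ?_⟩
  · rw [neg_mulVec, minkowskiReflection_mulVec]
    simp only [Pi.neg_apply, Pi.sub_apply, Pi.smul_apply, smul_eq_mul]
    have : -(x 0 - 2 * (a ⬝ᵥ G *ᵥ x) / (a ⬝ᵥ G *ᵥ a) * a 0) =
        (2 * (a ⬝ᵥ G *ᵥ x) * a 0 - x 0 * (a ⬝ᵥ G *ᵥ a)) / (a ⬝ᵥ G *ᵥ a) := by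
      field_simp
      ring
    rw [this]
    exact div_nonneg hx0 ha.le
  · rw [neg_mulVec, mulVec_neg, dotProduct_neg, neg_dotProduct, neg_neg,
      minkowski_minkowskiReflection_mulVec ha.ne']
    exact hx.2

end minkowskiReflection

noncomputable def restFrameReflection (s : Fin 4 → ℝ) : Matrix (Fin 4) (Fin 4) ℝ :=
  -minkowskiReflection (s + √(s ⬝ᵥ G *ᵥ s) • ![1, 0, 0, 0])

lemma minkowski_add_sqrt_smul_unpolarized_pos {s : Fin 4 → ℝ} (hs : StokesAdmissible s)
    (hQ : 0 < s ⬝ᵥ G *ᵥ s) :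
    0 < (s + √(s ⬝ᵥ G *ᵥ s) • ![1, 0, 0, 0]) ⬝ᵥ G *ᵥ (s + √(s ⬝ᵥ G *ᵥ s) • ![1, 0, 0, 0]) := by
  rw [minkowski_add_smul_unpolarized]
  have := hs.1
  positivity

lemma restFrameReflection_mul_self {s : Fin 4 → ℝ} (hs : StokesAdmissible s)
    (hQ : 0 < s ⬝ᵥ G *ᵥ s) : restFrameReflection s * restFrameReflection s = 1 := by
  rw [restFrameReflection, neg_mul_neg,
    minkowskiReflection_mul_self (minkowski_add_sqrt_smul_unpolarized_pos hs hQ).ne']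

lemma mapsTo_restFrameReflection {s : Fin 4 → ℝ} (hs : StokesAdmissible s)
    (hQ : 0 < s ⬝ᵥ G *ᵥ s) :
    Set.MapsTo (restFrameReflection s *ᵥ ·) {s | StokesAdmissible s} {s | StokesAdmissible s} :=
  mapsTo_neg_minkowskiReflection (minkowski_add_sqrt_smul_unpolarized_pos hs hQ)

lemma restFrameReflection_mulVec_self {s : Fin 4 → ℝ} (hs : StokesAdmissible s)
    (hQ : 0 < s ⬝ᵥ G *ᵥ s) :
    restFrameReflection s *ᵥ s = √(s ⬝ᵥ G *ᵥ s) • ![1, 0, 0, 0] := by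
  have hsq := Real.mul_self_sqrt hQ.le
  have hpos := minkowski_add_sqrt_smul_unpolarized_pos hs hQ
  have hcoef : 2 * ((s + √(s ⬝ᵥ G *ᵥ s) • ![1, 0, 0, 0]) ⬝ᵥ G *ᵥ s) =
      (s + √(s ⬝ᵥ G *ᵥ s) • ![1, 0, 0, 0]) ⬝ᵥ G *ᵥ (s + √(s ⬝ᵥ G *ᵥ s) • ![1, 0, 0, 0]) := by
    rw [minkowski_add_smul_unpolarized, add_dotProduct, smul_dotProduct,
      dotProduct_G_mulVec ![1, 0, 0, 0]]
    simp only [cons_val_zero, cons_val_one, cons_val, smul_eq_mul]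
    linear_combination -hsq
  rw [restFrameReflection, neg_mulVec, minkowskiReflection_mulVec, hcoef, div_self hpos.ne',
    one_smul]
  abel

def stokesInterval (s : Fin 4 → ℝ) : Set (Fin 4 → ℝ) :=
  {x | StokesAdmissible x ∧ StokesAdmissible (s - x)}

section stokesInterval

variable {A : Matrix (Fin 4) (Fin 4) ℝ}

lemma mapsTo_stokesInterval
    (hA : Set.MapsTo (A *ᵥ ·) {s | StokesAdmissible s} {s | StokesAdmissible s})
    (s : Fin 4 → ℝ) : Set.MapsTo (A *ᵥ ·) (stokesInterval s) (stokesInterval (A *ᵥ s)) :=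
  fun x hx => ⟨hA hx.1, by simpa [mulVec_sub] using hA hx.2⟩

lemma image_stokesInterval
    (hA : Set.MapsTo (A *ᵥ ·) {s | StokesAdmissible s} {s | StokesAdmissible s})
    (hAA : A * A = 1) (s : Fin 4 → ℝ) :
    (A *ᵥ ·) '' stokesInterval s = stokesInterval (A *ᵥ s) := by
  refine (mapsTo_stokesInterval hA s).image_subset.antisymm fun x hx => ⟨A *ᵥ x, ?_, ?_⟩
  · simpa [mulVec_mulVec, hAA] using mapsTo_stokesInterval hA _ hx
  · simp [mulVec_mulVec, hAA]

lemma stokesInterval_smul {c : ℝ} (hc : 0 < c) (s : Fin 4 → ℝ) :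
    stokesInterval (c • s) = c • stokesInterval s := by
  ext x
  rw [Set.mem_smul_set_iff_inv_smul_mem₀ hc.ne']
  refine and_congr (stokesAdmissible_smul_iff (inv_pos.2 hc)).symm ?_
  rw [← stokesAdmissible_smul_iff (inv_pos.2 hc), smul_sub, smul_smul, inv_mul_cancel₀ hc.ne',
    one_smul]

lemma stokesInterval_subset_add {t : Fin 4 → ℝ} (ht : StokesAdmissible t) (s : Fin 4 → ℝ) :
    stokesInterval s ⊆ stokesInterval (s + t) :=
  fun x hx => ⟨hx.1, by simpa [add_sub_right_comm] using hx.2.add ht⟩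

lemma volume_image_mulVec (A : Matrix (Fin 4) (Fin 4) ℝ) (S : Set (Fin 4 → ℝ)) :
    volume ((A *ᵥ ·) '' S) = ENNReal.ofReal |A.det| * volume S := by
  rw [show (A *ᵥ ·) = toLin' A from funext fun x => (toLin'_apply A x).symm,
    Measure.addHaar_image_linearMap, LinearMap.det_toLin']

lemma volume_stokesInterval_unpolarized_pos : 0 < volume (stokesInterval ![1, 0, 0, 0]) := by
  have hU : IsOpen {x : Fin 4 → ℝ | (0 < x 0 ∧ 0 < x ⬝ᵥ G *ᵥ x) ∧
      (0 < (![1, 0, 0, 0] - x : Fin 4 → ℝ) 0 ∧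
        0 < (![1, 0, 0, 0] - x) ⬝ᵥ G *ᵥ (![1, 0, 0, 0] - x))} := by
    refine .and (.and ?_ ?_) (.and ?_ ?_) <;> exact isOpen_lt continuous_const (by fun_prop)
  refine (hU.measure_pos volume ⟨![1 / 2, 0, 0, 0], ?_⟩).trans_le (measure_mono ?_)
  · refine ⟨⟨by norm_num, ?_⟩, by norm_num, ?_⟩ <;>
      simp only [dotProduct_G_mulVec, Pi.sub_apply, cons_val_zero, cons_val_one, cons_val] <;>
      norm_num
  · exact fun x hx => ⟨⟨hx.1.1.le, hx.1.2.le⟩, hx.2.1.le, hx.2.2.le⟩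

lemma volume_stokesInterval_unpolarized_ne_top : volume (stokesInterval ![1, 0, 0, 0]) ≠ ⊤ := by
  refine ((Metric.isBounded_closedBall (x := 0) (r := 1)).subset fun x hx => ?_).measure_lt_top.ne
  obtain ⟨hx, hx'⟩ := hx
  have hx01 : x 0 ≤ 1 := by simpa using hx'.1
  rw [stokesAdmissible_iff] at hx
  rw [mem_closedBall_zero_iff, pi_norm_le_iff_of_nonneg zero_le_one]
  intro i
  rw [Real.norm_eq_abs, abs_le]
  fin_cases i <;> simp <;> constructor <;> nlinarith

lemma volume_stokesInterval {s : Fin 4 → ℝ} (hs : StokesAdmissible s) (hQ : 0 < s ⬝ᵥ G *ᵥ s) :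
    volume (stokesInterval s) =
      ENNReal.ofReal ((s ⬝ᵥ G *ᵥ s) ^ 2) * volume (stokesInterval ![1, 0, 0, 0]) := by
  have hPP := restFrameReflection_mul_self hs hQ
  have hdet : |(restFrameReflection s).det| = 1 := by
    have h : (restFrameReflection s).det * (restFrameReflection s).det = 1 := by
      rw [← det_mul, hPP, det_one]
    rcases mul_self_eq_one_iff.1 h with h | h <;> simp [h]
  calc volume (stokesInterval s)
      = volume ((restFrameReflection s *ᵥ ·) '' stokesInterval s) := by
        rw [volume_image_mulVec, hdet, ENNReal.ofReal_one, one_mul]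
    _ = volume (√(s ⬝ᵥ G *ᵥ s) • stokesInterval ![1, 0, 0, 0]) := by
        rw [image_stokesInterval (mapsTo_restFrameReflection hs hQ) hPP,
          restFrameReflection_mulVec_self hs hQ, stokesInterval_smul (Real.sqrt_pos.2 hQ)]
    _ = _ := by
        rw [Measure.addHaar_smul, Module.finrank_fin_fun, abs_of_nonneg (by positivity),
          show √(s ⬝ᵥ G *ᵥ s) ^ 4 = (√(s ⬝ᵥ G *ᵥ s) ^ 2) ^ 2 by ring, Real.sq_sqrt hQ.le]

lemma abs_det_mul_sq_le_sq
    (hA : Set.MapsTo (A *ᵥ ·) {s | StokesAdmissible s} {s | StokesAdmissible s})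
    {s : Fin 4 → ℝ} (hs : StokesAdmissible s) :
    |A.det| * (s ⬝ᵥ G *ᵥ s) ^ 2 ≤ (A *ᵥ s ⬝ᵥ G *ᵥ (A *ᵥ s)) ^ 2 := by
  rcases hs.2.eq_or_lt with hQ | hQ
  · rw [← hQ, zero_pow two_ne_zero, mul_zero]
    positivity
  have hAs : StokesAdmissible (A *ᵥ s) := hA hs
  -- `A *ᵥ s` may lie on the boundary of the cone, so compare with the interior point `A s + ε e₀`.
  have hε : ∀ ε > 0, |A.det| * (s ⬝ᵥ G *ᵥ s) ^ 2 ≤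
      (A *ᵥ s ⬝ᵥ G *ᵥ (A *ᵥ s) + 2 * ε * (A *ᵥ s) 0 + ε ^ 2) ^ 2 := by
    intro ε hε
    have ht := hAs.add (stokesAdmissible_unpolarized.smul hε.le)
    have htQ : 0 < (A *ᵥ s + ε • ![1, 0, 0, 0]) ⬝ᵥ G *ᵥ (A *ᵥ s + ε • ![1, 0, 0, 0]) := by
      rw [minkowski_add_smul_unpolarized]
      have := hAs.1
      have := hAs.2
      positivity
    have hvol : ENNReal.ofReal |A.det| * volume (stokesInterval s) ≤
        volume (stokesInterval (A *ᵥ s + ε • ![1, 0, 0, 0])) := by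
      rw [← volume_image_mulVec]
      exact measure_mono ((mapsTo_stokesInterval hA s).image_subset.trans
        (stokesInterval_subset_add (stokesAdmissible_unpolarized.smul hε.le) _))
    rw [volume_stokesInterval hs hQ, volume_stokesInterval ht htQ, ← mul_assoc,
      ← ENNReal.ofReal_mul (abs_nonneg _), ENNReal.mul_le_mul_iff_left
        volume_stokesInterval_unpolarized_pos.ne' volume_stokesInterval_unpolarized_ne_top,
      ENNReal.ofReal_le_ofReal_iff (sq_nonneg _), minkowski_add_smul_unpolarized] at hvol
    exact hvol
  refine ge_of_tendsto (x := 𝓝[>] 0) ?_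
    (eventually_nhdsWithin_of_forall fun ε (h : 0 < ε) => hε ε h)
  have hcont : Continuous fun ε : ℝ =>
      (A *ᵥ s ⬝ᵥ G *ᵥ (A *ᵥ s) + 2 * ε * (A *ᵥ s) 0 + ε ^ 2) ^ 2 := by fun_prop
  simpa using (hcont.tendsto 0).mono_left nhdsWithin_le_nhds

end stokesInterval

theorem minkowski_nondecreasing_of_physical_mueller_general
    (M : Matrix (Fin 4) (Fin 4) ℝ) (hdet : M.det = 1)
    (hphys : (cloudeCCM M).PosSemidef) :
    ∀ s : Fin 4 → ℝ, StokesAdmissible s →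
      s ⬝ᵥ G.mulVec s ≤ (M.mulVec s) ⬝ᵥ G.mulVec (M.mulVec s) := by
  intro s hs
  have hM := mapsTo_mulVec_of_cloudeCCM_posSemidef hphys
  have h := abs_det_mul_sq_le_sq hM hs
  rw [hdet, abs_one, one_mul] at h
  exact (pow_le_pow_iff_left₀ hs.2 (hM hs).2 two_ne_zero).1 h

/-- A physically realizable, invertible, unit-determinant Mueller matrix cannot decrease
the Minkowski metric of any admissible Stokes vector. -/
theorem minkowski_nondecreasing_of_physical_mueller
    (M : Matrix (Fin 4) (Fin 4) ℝ) (hinv : IsUnit M) (hdet : M.det = 1)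
    (hphys : (cloudeCCM M).PosSemidef) :
    ∀ s : Fin 4 → ℝ, StokesAdmissible s →
      s ⬝ᵥ G.mulVec s ≤ (M.mulVec s) ⬝ᵥ G.mulVec (M.mulVec s) :=
  minkowski_nondecreasing_of_physical_mueller_general M hdet hphys
end

section
/- Let d₁, d₂, d₃ ≥ 0 and let m = diag(d₁+d₂+d₃, d₁−d₂−d₃, −d₁+d₂−d₃, −d₁−d₂+d₃) be the type-I canonical depolarizing differential Mueller matrix. Then for every t ≥ 0 and every admissible Stokes vector s ∈ ℝ⁴, the matrix M = exp(t·m) satisfies (M s)ᵀ G (M s) ≥ sᵀ G s. -/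
open Matrix

/-!
`exp (t • m)` is the diagonal matrix of the factors `exp (t wᵢ)`, where `w` is the diagonal
of `m`. For type I the first weight `d₁ + d₂ + d₃` is nonnegative and dominates the other three,
so the intensity factor `a₀ = exp (t w₀)` is at least `1` and at least every other factor. Hence
`a₀² s₀² - ∑ aᵢ² sᵢ² ≥ a₀² (s₀² - ∑ sᵢ²) ≥ s₀² - ∑ sᵢ²`, the last step because `sᵀGs ≥ 0`.
-/

theorem minkowski_form_eq (v : Fin 4 → ℝ) :
    v ⬝ᵥ G *ᵥ v = v 0 ^ 2 - v 1 ^ 2 - v 2 ^ 2 - v 3 ^ 2 := by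
  simp only [dotProduct, G, mulVec_diagonal, Fin.sum_univ_four, cons_val_zero, cons_val_one,
    cons_val, one_mul, neg_mul, mul_neg]
  ring

theorem minkowski_form_le_diagonal_mulVec {a s : Fin 4 → ℝ} (ha₀ : 1 ≤ a 0)
    (ha : ∀ i, |a i| ≤ a 0) (hs : 0 ≤ s ⬝ᵥ G *ᵥ s) :
    s ⬝ᵥ G *ᵥ s ≤ (diagonal a *ᵥ s) ⬝ᵥ G *ᵥ (diagonal a *ᵥ s) := by
  have hsq : ∀ i, a i ^ 2 * s i ^ 2 ≤ a 0 ^ 2 * s i ^ 2 := fun i =>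
    mul_le_mul_of_nonneg_right (sq_le_sq' (neg_le_of_abs_le (ha i)) (le_of_abs_le (ha i)))
      (sq_nonneg _)
  have ha₀sq : 1 ≤ a 0 ^ 2 := one_le_pow₀ ha₀
  rw [minkowski_form_eq] at hs
  simp only [minkowski_form_eq, mulVec_diagonal, mul_pow]
  calc s 0 ^ 2 - s 1 ^ 2 - s 2 ^ 2 - s 3 ^ 2
      ≤ a 0 ^ 2 * (s 0 ^ 2 - s 1 ^ 2 - s 2 ^ 2 - s 3 ^ 2) := le_mul_of_one_le_left hs ha₀sq
    _ ≤ a 0 ^ 2 * s 0 ^ 2 - a 1 ^ 2 * s 1 ^ 2 - a 2 ^ 2 * s 2 ^ 2 - a 3 ^ 2 * s 3 ^ 2 := by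
      linarith [hsq 1, hsq 2, hsq 3]

theorem exp_smul_diagonal {n : Type*} [Fintype n] [DecidableEq n] (t : ℝ) (w : n → ℝ) :
    NormedSpace.exp (t • diagonal w) = diagonal fun i => Real.exp (t * w i) := by
  rw [← diagonal_smul, exp_diagonal, Pi.exp_def]
  simp [Real.exp_eq_exp_ℝ]

theorem minkowski_form_le_exp_smul_diagonal {w s : Fin 4 → ℝ} (hw₀ : 0 ≤ w 0)
    (hw : ∀ i, w i ≤ w 0) {t : ℝ} (ht : 0 ≤ t) (hs : 0 ≤ s ⬝ᵥ G *ᵥ s) :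
    s ⬝ᵥ G *ᵥ s ≤ (NormedSpace.exp (t • diagonal w) *ᵥ s) ⬝ᵥ
      G *ᵥ (NormedSpace.exp (t • diagonal w) *ᵥ s) := by
  rw [exp_smul_diagonal]
  refine minkowski_form_le_diagonal_mulVec (Real.one_le_exp (mul_nonneg ht hw₀)) (fun i => ?_) hs
  rw [abs_of_pos (Real.exp_pos _)]
  exact Real.exp_le_exp.2 (mul_le_mul_of_nonneg_left (hw i) ht)

/-- For the type-I canonical depolarizing differential Mueller matrix with nonnegative
canonical parameters, the exponential exp(t·m) cannot decrease the Minkowski metric of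
any admissible Stokes vector. -/
theorem minkowski_nondecreasing_exp_typeI
    (d₁ d₂ d₃ : ℝ) (h₁ : 0 ≤ d₁) (h₂ : 0 ≤ d₂) (h₃ : 0 ≤ d₃)
    (m : Matrix (Fin 4) (Fin 4) ℝ)
    (hm : m = Matrix.diagonal ![d₁ + d₂ + d₃, d₁ - d₂ - d₃, -d₁ + d₂ - d₃, -d₁ - d₂ + d₃])
    (t : ℝ) (ht : 0 ≤ t) (s : Fin 4 → ℝ) (hs : StokesAdmissible s) :
    s ⬝ᵥ G.mulVec s ≤
      ((NormedSpace.exp (t • m)).mulVec s) ⬝ᵥ G.mulVec ((NormedSpace.exp (t • m)).mulVec s) := by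
  subst hm
  refine minkowski_form_le_exp_smul_diagonal (add_nonneg (add_nonneg h₁ h₂) h₃) (fun i => ?_)
    ht hs.2
  fin_cases i <;> simp <;> linarith
end

section
/- Let d₁, d₂ ≥ 0 and let m be the type-II canonical depolarizing differential Mueller matrix m = [[d₁+d₂, d₂, 0, 0], [−d₂, d₁−d₂, 0, 0], [0, 0, −d₁, 0], [0, 0, 0, −d₁]]. Then for every t ≥ 0 and every admissible Stokes vector s ∈ ℝ⁴, the matrix M = exp(t·m) satisfies (M s)ᵀ G (M s) ≥ sᵀ G s. -/
/-!
Write `t • m = a • D + u • N` with `a = t d₁`, `u = t d₂`, `D = diag(1, 1, -1, -1)` and `N` the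
square-zero matrix acting as `(s₀, s₁) ↦ (s₀ + s₁, -(s₀ + s₁))` on the first two coordinates.
Since `D` and `N` commute, `exp (t • m) = diag(eᵃ, eᵃ, e⁻ᵃ, e⁻ᵃ) * (1 + u • N)`. The factor
`1 + u • N` fixes the light-cone coordinate `s₀ + s₁` and raises the Minkowski square by
`2u(s₀ + s₁)²`; the diagonal factor then stretches the timelike plane and contracts the spacelike
one, which can only raise the Minkowski square of a vector inside the light cone.
-/

open Matrix

open NormedSpace

theorem NormedSpace.exp_eq_one_add_of_mul_self_eq_zero {𝔸 : Type*} [Ring 𝔸] [Algebra ℚ 𝔸]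
    [TopologicalSpace 𝔸] [IsTopologicalRing 𝔸] {x : 𝔸} (h : x * x = 0) : exp x = 1 + x := by
  have hpow : ∀ k ∉ Finset.range 2, ((k.factorial : ℚ)⁻¹ • x ^ k) = 0 := by
    intro k hk
    obtain ⟨j, rfl⟩ := Nat.exists_eq_add_of_le (not_lt.mp (Finset.mem_range.not.mp hk))
    rw [pow_add, sq, h, zero_mul, smul_zero]
  simp only [exp_eq_tsum_rat]
  rw [tsum_eq_sum hpow]
  simp [Finset.sum_range_succ]

def typeIIDiagonal : Matrix (Fin 4) (Fin 4) ℝ := diagonal ![1, 1, -1, -1]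

def typeIINilpotent : Matrix (Fin 4) (Fin 4) ℝ :=
  !![1, 1, 0, 0; -1, -1, 0, 0; 0, 0, 0, 0; 0, 0, 0, 0]

theorem typeII_eq_smul_add_smul (d₁ d₂ : ℝ) :
    !![d₁ + d₂, d₂, 0, 0; -d₂, d₁ - d₂, 0, 0; 0, 0, -d₁, 0; 0, 0, 0, -d₁] =
      d₁ • typeIIDiagonal + d₂ • typeIINilpotent := by
  ext i j
  fin_cases i <;> fin_cases j <;> simp [typeIIDiagonal, typeIINilpotent, sub_eq_add_neg]

theorem typeIINilpotent_mul_self : typeIINilpotent * typeIINilpotent = 0 := by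
  ext i j
  fin_cases i <;> fin_cases j <;> simp [typeIINilpotent, mul_apply, Fin.sum_univ_four]

theorem commute_typeIIDiagonal_typeIINilpotent : Commute typeIIDiagonal typeIINilpotent := by
  ext i j
  fin_cases i <;> fin_cases j <;>
    simp [typeIIDiagonal, typeIINilpotent, mul_apply, Fin.sum_univ_four]

theorem exp_smul_typeIIDiagonal_add_smul_typeIINilpotent (a u : ℝ) :
    exp (a • typeIIDiagonal + u • typeIINilpotent) =
      diagonal ![Real.exp a, Real.exp a, Real.exp (-a), Real.exp (-a)] *
        (1 + u • typeIINilpotent) := by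
  have hcomm := (commute_typeIIDiagonal_typeIINilpotent.smul_left a).smul_right u
  have hsq : (u • typeIINilpotent) * (u • typeIINilpotent) = 0 := by
    rw [smul_mul_smul, typeIINilpotent_mul_self, smul_zero]
  rw [exp_add_of_commute _ _ hcomm, exp_eq_one_add_of_mul_self_eq_zero hsq, typeIIDiagonal,
    ← diagonal_smul, exp_diagonal, Pi.exp_def]
  congr 2
  ext i
  fin_cases i <;> simp [← Real.exp_eq_exp_ℝ]

theorem dotProduct_G_mulVec_self (s : Fin 4 → ℝ) :
    s ⬝ᵥ G *ᵥ s = s 0 ^ 2 - s 1 ^ 2 - s 2 ^ 2 - s 3 ^ 2 := by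
  simp only [G, dotProduct, mulVec_diagonal, Fin.sum_univ_four, cons_val_zero, cons_val_one,
    cons_val]
  ring

theorem typeIINilpotent_mulVec (s : Fin 4 → ℝ) :
    typeIINilpotent *ᵥ s = ![s 0 + s 1, -(s 0 + s 1), 0, 0] := by
  ext i
  fin_cases i <;> simp [typeIINilpotent, mulVec, dotProduct, Fin.sum_univ_four, add_comm]

theorem dotProduct_G_mulVec_one_add_smul_typeIINilpotent (u : ℝ) (s : Fin 4 → ℝ) :
    ((1 + u • typeIINilpotent) *ᵥ s) ⬝ᵥ G *ᵥ ((1 + u • typeIINilpotent) *ᵥ s) =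
      s ⬝ᵥ G *ᵥ s + 2 * u * (s 0 + s 1) ^ 2 := by
  rw [add_mulVec, one_mulVec, smul_mulVec, typeIINilpotent_mulVec, dotProduct_G_mulVec_self,
    dotProduct_G_mulVec_self]
  simp only [Pi.add_apply, Pi.smul_apply, smul_eq_mul, cons_val_zero, cons_val_one, cons_val]
  ring

theorem dotProduct_G_mulVec_le_diagonal {e b : ℝ} (he : 1 ≤ e) (hb : b ^ 2 ≤ 1)
    {v : Fin 4 → ℝ} (hv : 0 ≤ v ⬝ᵥ G *ᵥ v) :
    v ⬝ᵥ G *ᵥ v ≤ (diagonal ![e, e, b, b] *ᵥ v) ⬝ᵥ G *ᵥ (diagonal ![e, e, b, b] *ᵥ v) := by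
  simp only [dotProduct_G_mulVec_self, mulVec_diagonal] at hv ⊢
  have htime : 0 ≤ v 0 ^ 2 - v 1 ^ 2 := by nlinarith [sq_nonneg (v 2), sq_nonneg (v 3)]
  have he2 : 0 ≤ e ^ 2 - 1 := by nlinarith
  simp only [cons_val_zero, cons_val_one, cons_val]
  nlinarith [mul_nonneg he2 htime, mul_nonneg (sub_nonneg.2 hb)
    (add_nonneg (sq_nonneg (v 2)) (sq_nonneg (v 3)))]

/-- For the type-II canonical depolarizing differential Mueller matrix with nonnegative
canonical parameters, the exponential exp(t·m) cannot decrease the Minkowski metric of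
any admissible Stokes vector. -/
theorem minkowski_nondecreasing_exp_typeII
    (d₁ d₂ : ℝ) (h₁ : 0 ≤ d₁) (h₂ : 0 ≤ d₂)
    (m : Matrix (Fin 4) (Fin 4) ℝ)
    (hm : m = !![d₁ + d₂, d₂, 0, 0;
                 -d₂, d₁ - d₂, 0, 0;
                 0, 0, -d₁, 0;
                 0, 0, 0, -d₁])
    (t : ℝ) (ht : 0 ≤ t) (s : Fin 4 → ℝ) (hs : StokesAdmissible s) :
    s ⬝ᵥ G.mulVec s ≤
      ((NormedSpace.exp (t • m)).mulVec s) ⬝ᵥ G.mulVec ((NormedSpace.exp (t • m)).mulVec s) := by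
  have ha : 0 ≤ t * d₁ := mul_nonneg ht h₁
  set v := (1 + (t * d₂) • typeIINilpotent) *ᵥ s
  have hexp : exp (t • m) *ᵥ s =
      diagonal ![Real.exp (t * d₁), Real.exp (t * d₁), Real.exp (-(t * d₁)),
        Real.exp (-(t * d₁))] *ᵥ v := by
    rw [hm, typeII_eq_smul_add_smul, smul_add, smul_smul, smul_smul,
      exp_smul_typeIIDiagonal_add_smul_typeIINilpotent, mulVec_mulVec]
  have hsv : s ⬝ᵥ G *ᵥ s ≤ v ⬝ᵥ G *ᵥ v := by
    rw [dotProduct_G_mulVec_one_add_smul_typeIINilpotent]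
    have hu : 0 ≤ t * d₂ := mul_nonneg ht h₂
    exact le_add_of_nonneg_right (by positivity)
  rw [hexp]
  exact hsv.trans <| dotProduct_G_mulVec_le_diagonal (Real.one_le_exp ha)
    (pow_le_one₀ (Real.exp_nonneg _) (Real.exp_le_one_iff.2 (neg_nonpos.2 ha)))
    (hs.2.trans hsv)
end

section
/- Let d₁, d₂ ∈ ℝ and let m be the type-II canonical depolarizing differential Mueller matrix m = [[d₁+d₂, d₂, 0, 0], [−d₂, d₁−d₂, 0, 0], [0, 0, −d₁, 0], [0, 0, 0, −d₁]]. For every s = (s₀,s₁,s₂,s₃) ∈ ℝ⁴ one has sᵀ(mᵀG + Gm)s = 2[d₂(s₀+s₁)² + d₁(s₀² − s₁² + s₂² + s₃²)], and if moreover d₁, d₂ ≥ 0 and s is admissible, then sᵀ(mᵀG + Gm)s ≥ 0. -/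
open Matrix

/-- Explicit expression of the quadratic form sᵀ(mᵀG + Gm)s for the type-II canonical
depolarizing differential Mueller matrix, and its nonnegativity for nonnegative canonical
parameters and admissible Stokes vectors. -/
theorem typeII_quadratic_form
    (d₁ d₂ : ℝ) (m : Matrix (Fin 4) (Fin 4) ℝ)
    (hm : m = !![d₁ + d₂, d₂, 0, 0;
                 -d₂, d₁ - d₂, 0, 0;
                 0, 0, -d₁, 0;
                 0, 0, 0, -d₁])
    (s : Fin 4 → ℝ) :
    s ⬝ᵥ (mᵀ * G + G * m).mulVec s =
      2 * (d₂ * (s 0 + s 1) ^ 2 + d₁ * ((s 0) ^ 2 - (s 1) ^ 2 + (s 2) ^ 2 + (s 3) ^ 2)) ∧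
    (0 ≤ d₁ → 0 ≤ d₂ → StokesAdmissible s →
      0 ≤ s ⬝ᵥ (mᵀ * G + G * m).mulVec s) := by
  have hG : G = !![1,0,0,0; 0,-1,0,0; 0,0,-1,0; 0,0,0,-1] := by
    unfold G
    ext i j
    fin_cases i <;> fin_cases j <;> simp [Matrix.diagonal, Matrix.vecHead, Matrix.vecTail]
  have key : s ⬝ᵥ (mᵀ * G + G * m).mulVec s =
      2 * (d₂ * (s 0 + s 1) ^ 2 + d₁ * ((s 0) ^ 2 - (s 1) ^ 2 + (s 2) ^ 2 + (s 3) ^ 2)) := by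
    subst hm
    rw [hG]
    simp [Matrix.mulVec, dotProduct, Fin.sum_univ_four, Matrix.mul_apply,
      Matrix.transpose_apply, Matrix.vecHead, Matrix.vecTail, Function.comp]
    ring
  refine ⟨key, fun hd₁ hd₂ ⟨hs0, hsG⟩ => ?_⟩
  have hq : s ⬝ᵥ G.mulVec s = (s 0)^2 - (s 1)^2 - (s 2)^2 - (s 3)^2 := by
    rw [hG]
    simp [Matrix.mulVec, dotProduct, Fin.sum_univ_four, Matrix.vecHead, Matrix.vecTail]
    ring
  rw [key]
  rw [hq] at hsG
  nlinarith [sq_nonneg (s 0 + s 1), sq_nonneg (s 2), sq_nonneg (s 3)]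
end

section
/- For any n×n complex matrix j and any m×m complex matrix k, the matrix exponential of the Kronecker sum factorizes as exp(j ⊗ I_m + I_n ⊗ k) = exp(j) ⊗ exp(k). (This identity underlies the commutativity of the diagram relating the exponential maps from differential Jones matrices to Jones matrices and from differential Mueller matrices to Mueller matrices.) -/
/-!
`A ⊗ₖ 1` and `1 ⊗ₖ B` commute, so the exponential of their sum is the product of their
exponentials. The maps `A ↦ A ⊗ₖ 1` and `B ↦ 1 ⊗ₖ B` are continuous ring homomorphisms, hence
commute with `exp`, and `(exp A ⊗ₖ 1) * (1 ⊗ₖ exp B) = exp A ⊗ₖ exp B`.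
-/

open Matrix Kronecker

theorem Continuous.matrix_kronecker {X R l m n p : Type*} [TopologicalSpace X]
    [TopologicalSpace R] [Mul R] [ContinuousMul R] {A : X → Matrix l m R}
    {B : X → Matrix n p R} (hA : Continuous A) (hB : Continuous B) :
    Continuous fun x => A x ⊗ₖ B x :=
  continuous_matrix fun i j => (hA.matrix_elem i.1 j.1).mul (hB.matrix_elem i.2 j.2)

namespace Matrix

open NormedSpace

variable {m n 𝔸 𝔹 : Type*} [Fintype m] [DecidableEq m] [Fintype n] [DecidableEq n]

theorem map_exp [NormedRing 𝔸] [NormedAlgebra ℚ 𝔸] [CompleteSpace 𝔸]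
    [NormedRing 𝔹] [NormedAlgebra ℚ 𝔹] {F : Type*} [FunLike F (Matrix m m 𝔸) (Matrix n n 𝔹)]
    [RingHomClass F (Matrix m m 𝔸) (Matrix n n 𝔹)] (f : F) (hf : Continuous f)
    (A : Matrix m m 𝔸) : f (exp A) = exp (f A) :=
  open scoped Norms.Operator in
  -- instance search does not see through the operator-norm uniformity to the product one
  haveI : @CompleteSpace (Matrix m m 𝔸) PseudoMetricSpace.toUniformSpace :=
    (inferInstance : CompleteSpace (m → m → 𝔸))
  NormedSpace.map_exp f hf A

theorem commute_kronecker_one_one_kronecker [CommSemiring 𝔸] (A : Matrix m m 𝔸)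
    (B : Matrix n n 𝔸) : Commute (A ⊗ₖ (1 : Matrix n n 𝔸)) ((1 : Matrix m m 𝔸) ⊗ₖ B) := by
  simp only [Commute, SemiconjBy, ← mul_kronecker_mul, mul_one, one_mul]

variable [NormedCommRing 𝔸] [NormedAlgebra ℚ 𝔸] [CompleteSpace 𝔸]

theorem exp_kronecker_one (A : Matrix m m 𝔸) :
    exp (A ⊗ₖ (1 : Matrix n n 𝔸)) = exp A ⊗ₖ 1 :=
  (map_exp ((kroneckerAlgEquiv m n 𝔸).toAlgHom.comp Algebra.TensorProduct.includeLeft)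
    (continuous_id.matrix_kronecker (continuous_const (y := (1 : Matrix n n 𝔸)))) A).symm

theorem exp_one_kronecker (B : Matrix n n 𝔸) :
    exp ((1 : Matrix m m 𝔸) ⊗ₖ B) = 1 ⊗ₖ exp B :=
  (map_exp ((kroneckerAlgEquiv m n 𝔸).toAlgHom.comp Algebra.TensorProduct.includeRight)
    ((continuous_const (y := (1 : Matrix m m 𝔸))).matrix_kronecker continuous_id) B).symm

theorem exp_kronecker_one_add_one_kronecker (A : Matrix m m 𝔸) (B : Matrix n n 𝔸) :
    exp (A ⊗ₖ (1 : Matrix n n 𝔸) + (1 : Matrix m m 𝔸) ⊗ₖ B) = exp A ⊗ₖ exp B := by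
  rw [exp_add_of_commute _ _ (commute_kronecker_one_one_kronecker A B),
    exp_kronecker_one, exp_one_kronecker, ← mul_kronecker_mul, mul_one, one_mul]

end Matrix

/-- The matrix exponential of a Kronecker sum factorizes as the Kronecker product of the
matrix exponentials: exp(j ⊗ I + I ⊗ k) = exp(j) ⊗ exp(k). -/
theorem exp_kronecker_sum (n m : ℕ)
    (j : Matrix (Fin n) (Fin n) ℂ) (k : Matrix (Fin m) (Fin m) ℂ) :
    NormedSpace.exp (j ⊗ₖ (1 : Matrix (Fin m) (Fin m) ℂ)
        + (1 : Matrix (Fin n) (Fin n) ℂ) ⊗ₖ k)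
      = NormedSpace.exp j ⊗ₖ NormedSpace.exp k :=
  exp_kronecker_one_add_one_kronecker j k
end
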